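/- Follower monotonicity with respect to the leader's schedule (claim used in the proof of Lemma 2 of the paper): for every leader schedule y ∈ 𝒮 and every follower schedule z ∈ 𝒮, the follower's profit can only remain the same or decrease once the leader opens facilities rather than none, i.e., π^F(𝟘,z) ≥ π^F(y,z), where 𝟘 denotes the empty location schedule (𝟘(i,t) = 0 for all i ∈ I, t ∈ 𝒯). -/

import Mathlib

open Finset

attribute [local instance] Classical.propDecidable

/-- Data of an instance of the competitive dynamic facility location problem under
cumulative customer demand (CDFLP-CCD).  `pref j a b` means that customer `j`
strictly prefers option `a` over option `b`, where `none` is the no-service option. -/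
structure CDFLP (I J : Type*) where
  /-- number of time periods; the period set is `{1, …, T}` -/
  T : ℕ
  /-- spawning demand of customer `j` at period `t` -/
  d : J → ℕ → ℝ
  /-- reward per unit of demand captured at location `i` -/
  r : I → ℝ
  /-- splitting factor -/
  ρ : ℝ
  /-- strict preference: `pref j a b` means `a ≻_j b` -/
  pref : J → Option I → Option I → Prop

namespace CDFLP

variable {I J : Type*} [Fintype I] [Fintype J]

/-- The model hypotheses: `T ≥ 1`, nonnegative demands and rewards, `ρ ∈ [0,1]`,
and every `≻_j` is a strict linear order on `I ∪ {0}`. -/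
def Valid (P : CDFLP I J) : Prop :=
  1 ≤ P.T ∧ (∀ j t, 0 ≤ P.d j t) ∧ (∀ i, 0 ≤ P.r i) ∧
    0 ≤ P.ρ ∧ P.ρ ≤ 1 ∧ ∀ j, IsStrictTotalOrder (Option I) (P.pref j)

/-- The locations considered by customer `j`, i.e. those preferred over no service. -/
noncomputable def considered (P : CDFLP I J) (j : J) : Finset I :=
  Finset.univ.filter fun i => P.pref j (some i) none

/-- `w` is a location schedule: on the planning horizon it is `{0,1}`-valued and opens
at most one facility per period. -/
def IsSched (P : CDFLP I J) (w : I → ℕ → ℝ) : Prop :=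
  ∀ t, 1 ≤ t → t ≤ P.T → (∀ i, w i t = 0 ∨ w i t = 1) ∧ (∑ i, w i t) ≤ 1

/-- `A_j^t(y,z)`: considered locations of `j` opened by the leader or the follower
at period `t`. -/
noncomputable def captureSet (P : CDFLP I J) (y z : I → ℕ → ℝ) (j : J) (t : ℕ) : Finset I :=
  Finset.univ.filter fun i => P.pref j (some i) none ∧ (y i t = 1 ∨ z i t = 1)

/-- `t ∈ 𝒯` is a capture period of customer `j`. -/
def IsCapture (P : CDFLP I J) (y z : I → ℕ → ℝ) (j : J) (t : ℕ) : Prop :=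
  1 ≤ t ∧ t ≤ P.T ∧ (P.captureSet y z j t).Nonempty

/-- `i` is the `≻_j`-greatest element of the capture set `A_j^t(y,z)`,
i.e. `i = i*(j,t)`. -/
def IsPatron (P : CDFLP I J) (y z : I → ℕ → ℝ) (j : J) (t : ℕ) (i : I) : Prop :=
  i ∈ P.captureSet y z j t ∧
    ∀ k ∈ P.captureSet y z j t, k ≠ i → P.pref j (some i) (some k)

/-- The greatest capture period of `j` smaller than `t` (`0` if there is none). -/
noncomputable def lastCap (P : CDFLP I J) (y z : I → ℕ → ℝ) (j : J) (t : ℕ) : ℕ :=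
  ((Finset.Ico 1 t).filter fun s => P.IsCapture y z j s).sup id

/-- `D_j^{ℓt}`: demand of customer `j` spawned in periods `ℓ+1, …, t`. -/
noncomputable def D (P : CDFLP I J) (j : J) (ℓ t : ℕ) : ℝ :=
  ∑ s ∈ Finset.Icc (ℓ + 1) t, P.d j s

/-- `v_{ij}^{ℓt}(y,z)`: fraction of `D_j^{ℓt}` captured by the follower through
location `i` at period `t`. -/
noncomputable def v (P : CDFLP I J) (y z : I → ℕ → ℝ) (j : J) (i : I) (ℓ t : ℕ) : ℝ :=
  if P.IsCapture y z j t ∧ ℓ = P.lastCap y z j t ∧ P.IsPatron y z j t i ∧ z i t = 1 then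
    1 - P.ρ * y i t
  else 0

/-- `u_{ij}^{ℓt}(y,z)`: fraction of `D_j^{ℓt}` captured by the leader through
location `i` at period `t`. -/
noncomputable def u (P : CDFLP I J) (y z : I → ℕ → ℝ) (j : J) (i : I) (ℓ t : ℕ) : ℝ :=
  if P.IsCapture y z j t ∧ ℓ = P.lastCap y z j t ∧ P.IsPatron y z j t i ∧ y i t = 1 then
    1 - (1 - P.ρ) * z i t
  else 0

/-- The follower's profit `π^F(y,z)`. -/
noncomputable def profitF (P : CDFLP I J) (y z : I → ℕ → ℝ) : ℝ :=
  ∑ t ∈ Finset.Icc 1 P.T, ∑ ℓ ∈ Finset.range t, ∑ j : J, ∑ i ∈ P.considered j,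
    P.r i * P.D j ℓ t * P.v y z j i ℓ t

/-- The leader's profit `π^L(y,z)`. -/
noncomputable def profitL (P : CDFLP I J) (y z : I → ℕ → ℝ) : ℝ :=
  ∑ t ∈ Finset.Icc 1 P.T, ∑ ℓ ∈ Finset.range t, ∑ j : J, ∑ i ∈ P.considered j,
    P.r i * P.D j ℓ t * P.u y z j i ℓ t

/-- `(y,z)` is bilevel feasible: both are schedules and `z` is an optimal
reaction of the follower against `y`. -/
def BilevelFeasible (P : CDFLP I J) (y z : I → ℕ → ℝ) : Prop :=
  P.IsSched y ∧ P.IsSched z ∧ ∀ z', P.IsSched z' → P.profitF y z' ≤ P.profitF y z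

end CDFLP

/-!
The follower's profit splits into one term per period `t`, customer `j` and location `i`,
namely `r_i · D_j^{ℓt} · v_{ij}^{ℓt}` at `ℓ` the last capture period before `t`, since `v`
vanishes at every other `ℓ`. Removing the leader compares these terms one by one: a location
patronized by `j` and opened by the follower stays the patron when the leader's facilities
disappear, its share rises from `1 - ρ y(i,t)` to `1`, and fewer capture periods push the last
one back, so `D_j^{ℓt}` only grows.
-/

namespace CDFLP

section

variable {I J : Type*} (P : CDFLP I J)

theorem D_nonneg (j : J) (hd : ∀ s, 0 ≤ P.d j s) (ℓ t : ℕ) : 0 ≤ P.D j ℓ t :=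
  sum_nonneg fun s _ => hd s

theorem D_antitone (j : J) (hd : ∀ s, 0 ≤ P.d j s) (t : ℕ) : Antitone fun ℓ => P.D j ℓ t :=
  fun _ _ h => sum_le_sum_of_subset_of_nonneg (Icc_subset_Icc (by omega) le_rfl)
    fun s _ _ => hd s

variable [Fintype I] (y z : I → ℕ → ℝ) (j : J)

theorem captureSet_zero_subset (t : ℕ) :
    P.captureSet (fun _ _ => 0) z j t ⊆ P.captureSet y z j t := by
  intro i hi
  simp only [captureSet, mem_filter, mem_univ, true_and] at hi ⊢
  exact ⟨hi.1, Or.inr (hi.2.resolve_left zero_ne_one)⟩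

variable {y z j}

theorem IsCapture.of_zero {t : ℕ} (h : P.IsCapture (fun _ _ => 0) z j t) :
    P.IsCapture y z j t :=
  ⟨h.1, h.2.1, h.2.2.mono (P.captureSet_zero_subset y z j t)⟩

theorem IsPatron.zero_of_follower {t : ℕ} {i : I} (h : P.IsPatron y z j t i)
    (hz : z i t = 1) : P.IsPatron (fun _ _ => 0) z j t i := by
  have hpref : P.pref j (some i) none := (mem_filter.1 h.1).2.1
  refine ⟨mem_filter.2 ⟨mem_univ i, hpref, Or.inr hz⟩, fun k hk hne => ?_⟩
  exact h.2 k (P.captureSet_zero_subset y z j t hk) hne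

variable (y z j)

theorem lastCap_zero_le (t : ℕ) : P.lastCap (fun _ _ => 0) z j t ≤ P.lastCap y z j t :=
  sup_mono (monotone_filter_right _ fun _ _ => IsCapture.of_zero P)

theorem lastCap_lt {t : ℕ} (ht : 1 ≤ t) : P.lastCap y z j t < t :=
  (Finset.sup_lt_iff (show (⊥ : ℕ) < t from ht)).2 fun _ hs => (mem_Ico.1 (mem_filter.1 hs).1).2

theorem v_eq_zero_of_ne_lastCap {i : I} {ℓ t : ℕ} (hℓ : ℓ ≠ P.lastCap y z j t) :
    P.v y z j i ℓ t = 0 :=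
  if_neg fun h => hℓ h.2.1

theorem v_zero_nonneg (i : I) (ℓ t : ℕ) : 0 ≤ P.v (fun _ _ => 0) z j i ℓ t := by
  unfold v
  split_ifs <;> norm_num

theorem sum_range_mul_v {t : ℕ} (ht : 1 ≤ t) (i : I) (g : ℕ → ℝ) :
    ∑ ℓ ∈ range t, g ℓ * P.v y z j i ℓ t =
      g (P.lastCap y z j t) * P.v y z j i (P.lastCap y z j t) t :=
  sum_eq_single_of_mem _ (mem_range.2 (P.lastCap_lt y z j ht)) fun _ _ hℓ => by
    rw [P.v_eq_zero_of_ne_lastCap y z j hℓ, mul_zero]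

theorem r_mul_D_mul_v_lastCap_le_zero {i : I} {t : ℕ} (hd : ∀ s, 0 ≤ P.d j s) (hr : 0 ≤ P.r i)
    (hρy : 0 ≤ P.ρ * y i t) :
    P.r i * P.D j (P.lastCap y z j t) t * P.v y z j i (P.lastCap y z j t) t ≤
      P.r i * P.D j (P.lastCap (fun _ _ => 0) z j t) t *
        P.v (fun _ _ => 0) z j i (P.lastCap (fun _ _ => 0) z j t) t := by
  by_cases h : P.IsCapture y z j t ∧ P.IsPatron y z j t i ∧ z i t = 1
  · obtain ⟨hcap, hpat, hz⟩ := h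
    have hpat0 := hpat.zero_of_follower P hz
    have hcap0 : P.IsCapture (fun _ _ => 0) z j t := ⟨hcap.1, hcap.2.1, i, hpat0.1⟩
    rw [v, if_pos ⟨hcap, rfl, hpat, hz⟩, v, if_pos ⟨hcap0, rfl, hpat0, hz⟩, mul_zero, sub_zero,
      mul_one]
    have hD : P.D j (P.lastCap y z j t) t ≤ P.D j (P.lastCap (fun _ _ => 0) z j t) t :=
      P.D_antitone j hd t (P.lastCap_zero_le y z j t)
    calc P.r i * P.D j (P.lastCap y z j t) t * (1 - P.ρ * y i t)
        ≤ P.r i * P.D j (P.lastCap y z j t) t :=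
          mul_le_of_le_one_right (mul_nonneg hr (P.D_nonneg j hd _ _)) (by linarith)
      _ ≤ P.r i * P.D j (P.lastCap (fun _ _ => 0) z j t) t := mul_le_mul_of_nonneg_left hD hr
  · rw [v, if_neg fun h' => h ⟨h'.1, h'.2.2⟩, mul_zero]
    exact mul_nonneg (mul_nonneg hr (P.D_nonneg j hd _ _)) (P.v_zero_nonneg z j i _ _)

theorem profitF_eq_sum_lastCap [Fintype J] : P.profitF y z =
    ∑ t ∈ Icc 1 P.T, ∑ j, ∑ i ∈ P.considered j,
      P.r i * P.D j (P.lastCap y z j t) t * P.v y z j i (P.lastCap y z j t) t := by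
  refine sum_congr rfl fun t ht => ?_
  rw [sum_comm]
  refine sum_congr rfl fun j _ => ?_
  rw [sum_comm]
  exact sum_congr rfl fun i _ => P.sum_range_mul_v y z j (mem_Icc.1 ht).1 i _

end

variable {I J : Type*} [Fintype I] [Fintype J]

theorem follower_profit_monotone_general (P : CDFLP I J) (hP : P.Valid)
    (y z : I → ℕ → ℝ) (hy : P.IsSched y) :
    P.profitF y z ≤ P.profitF (fun _ _ => 0) z := by
  obtain ⟨-, hd, hr, hρ, -, -⟩ := hP
  rw [P.profitF_eq_sum_lastCap, P.profitF_eq_sum_lastCap]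
  refine sum_le_sum fun t ht => sum_le_sum fun j _ => sum_le_sum fun i _ => ?_
  obtain ⟨ht1, htT⟩ := mem_Icc.1 ht
  have hρy : 0 ≤ P.ρ * y i t := by
    rcases (hy t ht1 htT).1 i with h | h <;> simp [h, hρ]
  exact P.r_mul_D_mul_v_lastCap_le_zero y z j (hd j) (hr i) hρy

/-- **Follower monotonicity.**  The follower's profit with a fixed schedule `z` can
only remain the same or decrease once the leader opens facilities rather than none:
`π^F(𝟘, z) ≥ π^F(y, z)`. -/
theorem follower_profit_monotone (P : CDFLP I J) (hP : P.Valid)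
    (y z : I → ℕ → ℝ) (hy : P.IsSched y) (hz : P.IsSched z) :
    P.profitF y z ≤ P.profitF (fun _ _ => 0) z :=
  follower_profit_monotone_general P hP y z hy

end CDFLP
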